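/- arXiv:2202.00136 — 7 statements merged into one kernel-verified Lean document; each statement's English description precedes it below -/
import Mathlib

section
/- There exist positive integers n1, n2 with n1 + n2 = 5 and a successful two-stage coding algorithm for the Z-channel of total length 5 correcting 1 asymmetric error whose message set has size 9. -/
/-- Hamming weight of a binary word: the number of ones. -/
def wt {n : ℕ} (a : Fin n → Bool) : ℕ :=
  (Finset.univ.filter (fun i => a i = true)).card

/-- N(a,b) = number of positions where a is 0 and b is 1. -/
def NN {n : ℕ} (a b : Fin n → Bool) : ℕ :=
  (Finset.univ.filter (fun i => a i = false ∧ b i = true)).card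

/-- The Z-distance d_Z(a,b) = max(N(a,b), N(b,a)). -/
def dZ {n : ℕ} (a b : Fin n → Bool) : ℕ := max (NN a b) (NN b a)

/-- A code correcting one asymmetric error: d_Z(a,b) ≥ 2 for distinct codewords. -/
def IsZCode {n : ℕ} (C : Finset (Fin n → Bool)) : Prop :=
  ∀ a ∈ C, ∀ b ∈ C, a ≠ b → 2 ≤ dZ a b

/-- The output ball B_1(a): words obtainable from a by at most one asymmetric (1→0) error. -/
def ball {n : ℕ} (a : Fin n → Bool) : Finset (Fin n → Bool) :=
  Finset.univ.filter (fun y => (∀ i, y i ≤ a i) ∧ wt a - wt y ≤ 1)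

/-- The number of free points of a code: words lying in no ball B_1(a), a ∈ C. -/
def freeCount {n : ℕ} (C : Finset (Fin n → Bool)) : ℕ :=
  (Finset.univ.filter (fun y => ∀ a ∈ C, y ∉ ball a)).card

/-- A two-stage coding algorithm (c1, c2, dec) of lengths n1, n2 with message set `Fin M`
is successful if it correctly decodes under at most one asymmetric error in total. -/
def TwoStageSuccess (n1 n2 M : ℕ)
    (c1 : Fin M → (Fin n1 → Bool))
    (c2 : Fin M → (Fin n1 → Bool) → (Fin n2 → Bool))
    (dec : (Fin n1 → Bool) → (Fin n2 → Bool) → Fin M) : Prop :=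
  ∀ (m : Fin M) (y1 : Fin n1 → Bool) (y2 : Fin n2 → Bool),
    (∀ i, y1 i ≤ c1 m i) → (∀ i, y2 i ≤ c2 m y1 i) →
    (wt (c1 m) - wt y1) + (wt (c2 m y1) - wt y2) ≤ 1 →
    dec y1 y2 = m

def myc1 : Fin 9 → (Fin 4 → Bool) :=
  ![![false,false,false,false], ![true,false,false,false], ![false,true,true,false], ![false,true,false,true], ![true,true,true,false], ![true,true,false,true], ![false,false,true,true], ![true,false,true,true], ![true,true,true,true]]

def n4 (y : Fin 4 → Bool) : ℕ :=
  (cond (y 0) 1 0) + 2 * (cond (y 1) 1 0) + 4 * (cond (y 2) 1 0) + 8 * (cond (y 3) 1 0)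

def c2tbl : Fin 9 → ℕ → Bool
  | 0, 0 => false
  | 1, 0 => true
  | 1, 1 => true
  | 2, 2 => false
  | 2, 4 => false
  | 2, 6 => false
  | 3, 2 => true
  | 3, 8 => false
  | 3, 10 => false
  | 4, 3 => false
  | 4, 5 => false
  | 4, 6 => true
  | 4, 7 => false
  | 5, 3 => true
  | 5, 9 => false
  | 5, 10 => true
  | 5, 11 => false
  | 6, 4 => true
  | 6, 8 => true
  | 6, 12 => false
  | 7, 5 => true
  | 7, 9 => true
  | 7, 12 => true
  | 7, 13 => false
  | 8, 7 => true
  | 8, 11 => true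
  | 8, 13 => true
  | 8, 14 => false
  | 8, 15 => false
  | _, _ => false

def myc2 : Fin 9 → (Fin 4 → Bool) → (Fin 1 → Bool) :=
  fun m y1 => ![c2tbl m (n4 y1)]

def dectbl : ℕ → Bool → Fin 9
  | 0, false => 0
  | 0, true => 1
  | 1, false => 1
  | 1, true => 1
  | 2, false => 2
  | 2, true => 3
  | 3, false => 4
  | 3, true => 5
  | 4, false => 2
  | 4, true => 6
  | 5, false => 4
  | 5, true => 7
  | 6, false => 2
  | 6, true => 4
  | 7, false => 4
  | 7, true => 8
  | 8, false => 3
  | 8, true => 6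
  | 9, false => 5
  | 9, true => 7
  | 10, false => 3
  | 10, true => 5
  | 11, false => 5
  | 11, true => 8
  | 12, false => 6
  | 12, true => 7
  | 13, false => 7
  | 13, true => 8
  | 14, false => 8
  | 15, false => 8
  | _, _ => 0

def mydec : (Fin 4 → Bool) → (Fin 1 → Bool) → Fin 9 :=
  fun y1 y2 => dectbl (n4 y1) (y2 0)

theorem two_stage_length_5_size_9 :
    ∃ (n1 n2 : ℕ), 0 < n1 ∧ 0 < n2 ∧ n1 + n2 = 5 ∧
      ∃ (c1 : Fin 9 → (Fin n1 → Bool))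
        (c2 : Fin 9 → (Fin n1 → Bool) → (Fin n2 → Bool))
        (dec : (Fin n1 → Bool) → (Fin n2 → Bool) → Fin 9),
        TwoStageSuccess n1 n2 9 c1 c2 dec := by
  refine ⟨4, 1, by norm_num, by norm_num, by norm_num, myc1, myc2, mydec, ?_⟩
  unfold TwoStageSuccess
  decide
end

section
/- There exist positive integers n1, n2 with n1 + n2 = 6 and a successful two-stage coding algorithm for the Z-channel of total length 6 correcting 1 asymmetric error whose message set has size 16. -/
def tsW4 (n : ℕ) : Fin 4 → Bool := fun i => n.testBit i.val
def tsW2 (n : ℕ) : Fin 2 → Bool := fun i => n.testBit i.val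
def tsIdx4 (y : Fin 4 → Bool) : Fin 16 :=
  ⟨(y 0).toNat + 2*(y 1).toNat + 4*(y 2).toNat + 8*(y 3).toNat, by cases y 0 <;> cases y 1 <;> cases y 2 <;> cases y 3 <;> decide⟩
def tsIdx2 (y : Fin 2 → Bool) : Fin 4 :=
  ⟨(y 0).toNat + 2*(y 1).toNat, by cases y 0 <;> cases y 1 <;> decide⟩
def tsC1tab : Fin 16 → ℕ := ![1, 2, 3, 4, 5, 6, 7, 8, 9, 10, 11, 12, 13, 14, 15, 15]
def tsC2tab : Fin 16 → Fin 16 → ℕ := ![![0, 0, 0, 0, 0, 0, 0, 0, 0, 0, 0, 0, 0, 0, 0, 0], ![1, 0, 0, 0, 0, 0, 0, 0, 0, 0, 0, 0, 0, 0, 0, 0], ![0, 1, 1, 0, 0, 0, 0, 0, 0, 0, 0, 0, 0, 0, 0, 0], ![2, 0, 0, 0, 0, 0, 0, 0, 0, 0, 0, 0, 0, 0, 0, 0], ![0, 2, 0, 0, 1, 0, 0, 0, 0, 0, 0, 0, 0, 0, 0, 0], ![0, 0, 2, 0, 2, 0, 0, 0, 0, 0, 0, 0, 0, 0, 0, 0],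 ![0, 0, 0, 1, 0, 1, 1, 0, 0, 0, 0, 0, 0, 0, 0, 0], ![3, 0, 0, 0, 0, 0, 0, 0, 0, 0, 0, 0, 0, 0, 0, 0], ![0, 3, 0, 0, 0, 0, 0, 0, 1, 0, 0, 0, 0, 0, 0, 0], ![0, 0, 3, 0, 0, 0, 0, 0, 2, 0, 0, 0, 0, 0, 0, 0], ![0, 0, 0, 2, 0, 0, 0, 0, 0, 1, 1, 0, 0, 0, 0, 0], ![0, 0, 0, 0, 3, 0, 0, 0, 3, 0, 0, 0, 0, 0, 0, 0], ![0, 0, 0, 0, 0, 2, 0, 0, 0, 2, 0, 0, 1, 0, 0, 0], ![0, 0, 0, 0, 0, 0, 2, 0, 0, 0, 2, 0, 2, 0, 0, 0], ![0, 0, 0, 0, 0, 0, 0, 1, 0, 0, 0, 1, 0, 1, 1, 0], ![0, 0, 0, 0, 0, 0, 0, 2, 0, 0, 0, 2, 0, 2, 2, 3]]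
def tsDectab : Fin 16 → Fin 4 → Fin 16 := ![![(0 : Fin 16), (1 : Fin 16), (3 : Fin 16), (7 : Fin 16)], ![(0 : Fin 16), (2 : Fin 16), (4 : Fin 16), (8 : Fin 16)], ![(1 : Fin 16), (2 : Fin 16), (5 : Fin 16), (9 : Fin 16)], ![(2 : Fin 16), (6 : Fin 16), (10 : Fin 16), (0 : Fin 16)], ![(3 : Fin 16), (4 : Fin 16), (5 : Fin 16), (11 : Fin 16)], ![(4 : Fin 16), (6 : Fin 16), (12 : Fin 16), (0 : Fin 16)], ![(5 : Fin 16), (6 : Fin 16), (13 : Fin 16), (0 : Fin 16)], ![(6 : Fin 16), (14 : Fin 16), (15 : Fin 16), (0 : Fin 16)], ![(7 : Fin 16), (8 : Fin 16), (9 : Fin 16), (11 : Fin 16)], ![(8 : Fin 16), (10 : Fin 16), (12 : Fin 16), (0 : Fin 16)], ![(9 : Fin 16), (10 : Fin 16), (13 : Fin 16), (0 : Fin 16)], ![(10 : Fin 16), (14 : Fin 16), (15 : Fin 16), (0 : Fin 16)], ![(11 : Fin 16), (12 : Fin 16), (13 : Fin 16), (0 : Fin 16)], ![(12 : Fin 16),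 (14 : Fin 16), (15 : Fin 16), (0 : Fin 16)], ![(13 : Fin 16), (14 : Fin 16), (15 : Fin 16), (0 : Fin 16)], ![(14 : Fin 16), (15 : Fin 16), (15 : Fin 16), (15 : Fin 16)]]
def tsC1 : Fin 16 → (Fin 4 → Bool) := fun m => tsW4 (tsC1tab m)
def tsC2 : Fin 16 → (Fin 4 → Bool) → (Fin 2 → Bool) := fun m y1 => tsW2 (tsC2tab m (tsIdx4 y1))
def tsDec : (Fin 4 → Bool) → (Fin 2 → Bool) → Fin 16 := fun y1 y2 => tsDectab (tsIdx4 y1) (tsIdx2 y2)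

theorem two_stage_length_6_size_16 :
    ∃ (n1 n2 : ℕ), 0 < n1 ∧ 0 < n2 ∧ n1 + n2 = 6 ∧
      ∃ (c1 : Fin 16 → (Fin n1 → Bool))
        (c2 : Fin 16 → (Fin n1 → Bool) → (Fin n2 → Bool))
        (dec : (Fin n1 → Bool) → (Fin n2 → Bool) → Fin 16),
        TwoStageSuccess n1 n2 16 c1 c2 dec := by
  exact ⟨4, 2, by norm_num, by norm_num, rfl, tsC1, tsC2, tsDec, by unfold TwoStageSuccess; decide⟩
end

section
/- There exist positive integers n1, n2 with n1 + n2 = 7 and a successful two-stage coding algorithm for the Z-channel of total length 7 correcting 1 asymmetric error whose message set has size 29. -/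
namespace TwoStage29

def firstList : List ℕ :=
  [31,31, 30,29,27,23,15, 28,26,25,22,21,19,14,13,11,7, 24,20,18,17,12,10,9,6,5,3, 0,0]

def toNat5 (y : Fin 5 → Bool) : ℕ :=
  (if y 0 then 1 else 0) + (if y 1 then 2 else 0) + (if y 2 then 4 else 0) +
  (if y 3 then 8 else 0) + (if y 4 then 16 else 0)

def toNat2 (y : Fin 2 → Bool) : ℕ :=
  (if y 0 then 1 else 0) + (if y 1 then 2 else 0)

def pop5 (b : ℕ) : ℕ := ((List.range 5).filter (fun j => b.testBit j)).length

def zeros5 (b : ℕ) : List ℕ := (List.range 5).filter (fun j => ! b.testBit j)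

def C1 (m : Fin 29) : Fin 5 → Bool := fun i => (firstList.getD m.val 0).testBit i.val

def c2nat (m : Fin 29) (b : ℕ) : ℕ :=
  let a := firstList.getD m.val 0
  if a = b then (if m.val = 1 ∨ m.val = 28 then 3 else 0)
  else if m.val = 1 then 2
  else
    let i := ((List.range 5).filter (fun j => a.testBit j && ! b.testBit j)).headD 0
    let r := ((List.range i).filter (fun j => ! b.testBit j)).length
    if pop5 b = 1 then r else r + 1

def C2 (m : Fin 29) (y1 : Fin 5 → Bool) : Fin 2 → Bool :=
  fun i => (c2nat m (toNat5 y1)).testBit i.val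

def decNat (b w : ℕ) : ℕ :=
  let wb := pop5 b
  if wb = 0 then (if w = 0 then 27 else 28)
  else if wb = 5 then (if w = 0 then 0 else 1)
  else if wb = 1 then firstList.idxOf (b + 2 ^ ((zeros5 b).getD w 0))
  else if w = 0 then firstList.idxOf b
  else if wb = 4 ∧ 2 ≤ w then 1
  else firstList.idxOf (b + 2 ^ ((zeros5 b).getD (w - 1) 0))

def Dec (y1 : Fin 5 → Bool) (y2 : Fin 2 → Bool) : Fin 29 :=
  ⟨decNat (toNat5 y1) (toNat2 y2) % 29, Nat.mod_lt _ (by norm_num)⟩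

end TwoStage29

theorem two_stage_length_7_size_29 :
    ∃ (n1 n2 : ℕ), 0 < n1 ∧ 0 < n2 ∧ n1 + n2 = 7 ∧
      ∃ (c1 : Fin 29 → (Fin n1 → Bool))
        (c2 : Fin 29 → (Fin n1 → Bool) → (Fin n2 → Bool))
        (dec : (Fin n1 → Bool) → (Fin n2 → Bool) → Fin 29),
        TwoStageSuccess n1 n2 29 c1 c2 dec := by
  refine ⟨5, 2, by norm_num, by norm_num, by norm_num,
    TwoStage29.C1, TwoStage29.C2, TwoStage29.Dec, ?_⟩
  unfold TwoStageSuccess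
  decide
end

section
/- There exist positive integers n1, n2 with n1 + n2 = 11 and a successful two-stage coding algorithm for the Z-channel of total length 11 correcting 1 asymmetric error whose message set has size 329. -/
/-
Messages are pairs `(v, x)` with `v ∈ {0,1}^7` and `x` in a small Z-code `C v ⊆ {0,1}^4`; the first
stage sends `v`. If `v` arrives intact, the second stage sends `x`, and the balls `B_1(x)`, `x ∈ C v`,
are disjoint. If `v` loses a bit, the receiver holds `y1` covered by `v`, the error budget is spent and
the second block arrives intact: it is a point of `{0,1}^4` outside every ball of `C y1`, reserved
injectively for `(v, x)` among the messages whose first word covers `y1`. This works as soon as, for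
every `y1`, those messages number at most `freeCount (C y1)`. Taking for `C v` prefixes of
`{0000, 1100, 0011, 1111}` (with 16, 15, 12, 9, 4 free points), a table of sizes with this property
and total 329 is verified by computation.
-/

open Finset Function

section Weight

variable {n : ℕ}

def ones (a : Fin n → Bool) : Finset (Fin n) := univ.filter (fun i => a i = true)

lemma ones_subset_ones {y a : Fin n → Bool} (hle : ∀ i, y i ≤ a i) : ones y ⊆ ones a := by
  intro i hi
  have := hle i
  simp only [ones, mem_filter, mem_univ, true_and] at hi ⊢
  rw [hi] at this
  exact le_antisymm (Bool.le_true _) this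

lemma card_ones_sdiff {y a : Fin n → Bool} (hle : ∀ i, y i ≤ a i) :
    #(ones a \ ones y) = wt a - wt y :=
  card_sdiff_of_subset (ones_subset_ones hle)

lemma eq_of_le_of_ones_subset {y a : Fin n → Bool} (hle : ∀ i, y i ≤ a i)
    (h : ones a ⊆ ones y) : y = a := by
  funext i
  have hi := hle i
  have hmem := @h i
  simp only [ones, mem_filter, mem_univ, true_and] at hmem
  cases hy : y i <;> cases ha : a i <;> simp_all [Bool.le_iff_imp]

lemma eq_of_le_of_wt_sub_eq_zero {y a : Fin n → Bool} (hle : ∀ i, y i ≤ a i)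
    (hw : wt a - wt y = 0) : y = a := by
  refine eq_of_le_of_ones_subset hle (sdiff_eq_empty_iff_subset.mp ?_)
  rw [← card_eq_zero, card_ones_sdiff hle, hw]

def parents (v : Fin n → Bool) : Finset (Fin n → Bool) :=
  (univ.filter (fun i => v i = false)).image (fun i => update v i true)

lemma sum_parents {M : Type*} [AddCommMonoid M] (f : (Fin n → Bool) → M) (v : Fin n → Bool) :
    ∑ u ∈ parents v, f u = ∑ i ∈ univ.filter (fun i => v i = false), f (update v i true) := by
  refine sum_image fun i hi j _ hij => ?_
  by_contra hne
  have := congrFun hij i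
  simp only [coe_filter, Set.mem_ofPred_eq, mem_univ, true_and] at hi
  rw [update_self, update_of_ne hne, hi] at this
  exact Bool.noConfusion this

lemma mem_parents_of_mem_ball {y a : Fin n → Bool} (hy : y ∈ ball a) (hne : y ≠ a) :
    a ∈ parents y := by
  obtain ⟨hle, hw⟩ := (mem_filter.mp hy).2
  have hdiff : #(ones a \ ones y) ≤ 1 := card_ones_sdiff hle ▸ hw
  obtain ⟨i, hi⟩ : (ones a \ ones y).Nonempty := by
    rw [nonempty_iff_ne_empty, Ne, sdiff_eq_empty_iff_subset]
    exact fun h => hne (eq_of_le_of_ones_subset hle h)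
  have hmem : ∀ j, j ∈ ones a \ ones y ↔ a j = true ∧ y j = false := by
    simp [ones]
  refine mem_image.mpr ⟨i, by simpa using ((hmem i).mp hi).2, funext fun j => ?_⟩
  rcases eq_or_ne j i with rfl | hji
  · simp [((hmem j).mp hi).1]
  · rw [update_of_ne hji]
    have hj : j ∉ ones a \ ones y := fun hj => hji (card_le_one.mp hdiff j hj i hi)
    have := hle j
    rw [hmem] at hj
    revert hj this
    cases y j <;> cases a j <;> decide

lemma NN_le_wt_sub {y a b : Fin n → Bool} (hya : ∀ i, y i ≤ a i) (hyb : ∀ i, y i ≤ b i) :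
    NN a b ≤ wt b - wt y := by
  rw [← card_ones_sdiff hyb]
  refine card_le_card fun i hi => ?_
  have := hya i
  simp only [ones, mem_filter, mem_sdiff, mem_univ, true_and] at hi ⊢
  rw [hi.1] at this
  simp_all [Bool.le_iff_imp]

lemma dZ_le_one_of_mem_ball {y a b : Fin n → Bool} (ha : y ∈ ball a) (hb : y ∈ ball b) :
    dZ a b ≤ 1 := by
  obtain ⟨hya, hwa⟩ := (mem_filter.mp ha).2
  obtain ⟨hyb, hwb⟩ := (mem_filter.mp hb).2
  exact max_le ((NN_le_wt_sub hya hyb).trans hwb) ((NN_le_wt_sub hyb hya).trans hwa)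

lemma IsZCode.eq_of_mem_ball {C : Finset (Fin n → Bool)} (hC : IsZCode C) {y a b : Fin n → Bool}
    (ha : a ∈ C) (hb : b ∈ C) (hya : y ∈ ball a) (hyb : y ∈ ball b) : a = b := by
  by_contra hne
  have := hC a ha b hb hne
  have := dZ_le_one_of_mem_ball hya hyb
  omega

lemma IsZCode.mono {C D : Finset (Fin n → Bool)} (hD : IsZCode D) (h : C ⊆ D) : IsZCode C :=
  fun a ha b hb => hD a (h ha) b (h hb)

def freePoints (C : Finset (Fin n → Bool)) : Finset (Fin n → Bool) :=
  univ.filter (fun y => ∀ a ∈ C, y ∉ ball a)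

lemma card_freePoints (C : Finset (Fin n → Bool)) : #(freePoints C) = freeCount C := rfl

end Weight

section TwoStage

variable {n1 n2 : ℕ}

def Received (x1 : Fin n1 → Bool) (x2 : Fin n2 → Bool) (y1 : Fin n1 → Bool) (y2 : Fin n2 → Bool) :
    Prop :=
  (∀ i, y1 i ≤ x1 i) ∧ (∀ i, y2 i ≤ x2 i) ∧ (wt x1 - wt y1) + (wt x2 - wt y2) ≤ 1

lemma exists_twoStageSuccess_of_injective {M : ℕ} [NeZero M] (c1 : Fin M → (Fin n1 → Bool))
    (c2 : Fin M → (Fin n1 → Bool) → (Fin n2 → Bool))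
    (h : ∀ m m' y1 y2, Received (c1 m) (c2 m y1) y1 y2 → Received (c1 m') (c2 m' y1) y1 y2 →
      m = m') :
    ∃ dec, TwoStageSuccess n1 n2 M c1 c2 dec := by
  classical
  refine ⟨fun y1 y2 => if hy : ∃ m, Received (c1 m) (c2 m y1) y1 y2 then hy.choose else 0, ?_⟩
  intro m y1 y2 h1 h2 h3
  have hm : Received (c1 m) (c2 m y1) y1 y2 := ⟨h1, h2, h3⟩
  have hex : ∃ m, Received (c1 m) (c2 m y1) y1 y2 := ⟨m, hm⟩
  dsimp only
  rw [dif_pos hex]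
  exact h _ _ y1 y2 hex.choose_spec hm

variable (C : (Fin n1 → Bool) → Finset (Fin n2 → Bool))

def messages : Finset (Σ _ : Fin n1 → Bool, Fin n2 → Bool) := univ.sigma C

def pending (v : Fin n1 → Bool) : Finset (Σ _ : Fin n1 → Bool, Fin n2 → Bool) :=
  (parents v).sigma C

variable {C}

noncomputable def relay (hfree : ∀ v, ∑ u ∈ parents v, #(C u) ≤ freeCount (C v))
    (v : Fin n1 → Bool) : pending C v ↪ freePoints (C v) :=
  (Embedding.nonempty_of_card_le (by
    rw [Fintype.card_coe, Fintype.card_coe, pending, card_sigma, card_freePoints]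
    exact hfree v)).some

noncomputable def secondStage (hfree : ∀ v, ∑ u ∈ parents v, #(C u) ≤ freeCount (C v))
    (s : Σ _ : Fin n1 → Bool, Fin n2 → Bool) (y1 : Fin n1 → Bool) : Fin n2 → Bool :=
  -- the last branch is never used: `y1` is then not a possible reception of `s.1`
  if y1 = s.1 then s.2 else if h : s ∈ pending C y1 then relay hfree y1 ⟨s, h⟩ else s.2

lemma received_secondStage {hfree : ∀ v, ∑ u ∈ parents v, #(C u) ≤ freeCount (C v)}
    {s : Σ _ : Fin n1 → Bool, Fin n2 → Bool} (hsC : s ∈ messages C) {y1 : Fin n1 → Bool}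
    {y2 : Fin n2 → Bool} (h : Received s.1 (secondStage hfree s y1) y1 y2) :
    (y1 = s.1 ∧ y2 ∈ ball s.2) ∨
      ∃ hs : s ∈ pending C y1, y2 = (relay hfree y1 ⟨s, hs⟩ : Fin n2 → Bool) := by
  obtain ⟨h1, h2, hw⟩ := h
  by_cases hy1 : y1 = s.1
  · have hw1 : wt s.1 - wt y1 = 0 := by rw [hy1, Nat.sub_self]
    rw [secondStage, if_pos hy1] at h2 hw
    exact .inl ⟨hy1, mem_filter.mpr ⟨mem_univ _, h2, by omega⟩⟩
  · have hw1 : wt s.1 - wt y1 ≠ 0 := fun h0 => hy1 (eq_of_le_of_wt_sub_eq_zero h1 h0)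
    have hball : y1 ∈ ball s.1 := mem_filter.mpr ⟨mem_univ _, h1, by omega⟩
    have hs : s ∈ pending C y1 :=
      mem_sigma.mpr ⟨mem_parents_of_mem_ball hball hy1, (mem_sigma.mp hsC).2⟩
    rw [secondStage, if_neg hy1, dif_pos hs] at h2 hw
    exact .inr ⟨hs, eq_of_le_of_wt_sub_eq_zero h2 (by omega)⟩

lemma relay_not_mem_ball {hfree : ∀ v, ∑ u ∈ parents v, #(C u) ≤ freeCount (C v)}
    {v : Fin n1 → Bool} (t : pending C v) {a : Fin n2 → Bool} (ha : a ∈ C v) :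
    (relay hfree v t : Fin n2 → Bool) ∉ ball a :=
  (mem_filter.mp (relay hfree v t).2).2 a ha

lemma eq_of_received_secondStage (hC : ∀ v, IsZCode (C v))
    {hfree : ∀ v, ∑ u ∈ parents v, #(C u) ≤ freeCount (C v)}
    {s s' : Σ _ : Fin n1 → Bool, Fin n2 → Bool} (hs : s ∈ messages C) (hs' : s' ∈ messages C)
    {y1 : Fin n1 → Bool} {y2 : Fin n2 → Bool} (h : Received s.1 (secondStage hfree s y1) y1 y2)
    (h' : Received s'.1 (secondStage hfree s' y1) y1 y2) : s = s' := by
  have hmem : ∀ {t}, t ∈ messages C → t.2 ∈ C t.1 := fun ht => (mem_sigma.mp ht).2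
  rcases received_secondStage hs h with ⟨rfl, hb⟩ | ⟨hp, rfl⟩ <;>
    rcases received_secondStage hs' h' with ⟨hy, hb'⟩ | ⟨hp', hy'⟩
  · exact Sigma.ext hy (heq_of_eq ((hC _).eq_of_mem_ball (hmem hs) (hy ▸ hmem hs') hb hb'))
  · exact absurd (hy' ▸ hb) (relay_not_mem_ball _ (hmem hs))
  · subst hy
    exact absurd hb' (relay_not_mem_ball _ (hmem hs'))
  · exact congrArg Subtype.val ((relay hfree y1).injective (Subtype.ext hy'))

theorem exists_twoStageSuccess_of_sum_parents_le (hC : ∀ v, IsZCode (C v))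
    (hfree : ∀ v, ∑ u ∈ parents v, #(C u) ≤ freeCount (C v)) (hpos : 0 < ∑ v, #(C v)) :
    ∃ c1 c2 dec, TwoStageSuccess n1 n2 (∑ v, #(C v)) c1 c2 dec := by
  rw [← card_sigma]
  have : NeZero #(messages C) := ⟨by rw [messages, card_sigma]; omega⟩
  let e := (messages C).equivFin.symm
  obtain ⟨dec, hdec⟩ := exists_twoStageSuccess_of_injective (fun m => (e m).1.1)
    (fun m => secondStage hfree (e m)) fun m m' _ _ h h' =>
      e.injective (Subtype.ext (eq_of_received_secondStage hC (e m).2 (e m').2 h h'))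
  exact ⟨_, _, dec, hdec⟩

end TwoStage

def zCode4 : List (Fin 4 → Bool) :=
  [![false, false, false, false], ![true, true, false, false], ![false, false, true, true],
    ![true, true, true, true]]

def prefixCode (k : ℕ) : Finset (Fin 4 → Bool) := (zCode4.take k).toFinset

lemma isZCode_prefixCode (k : ℕ) : IsZCode (prefixCode k) :=
  (by unfold IsZCode; decide : IsZCode (prefixCode 4)).mono fun x hx => by
    simp only [prefixCode, List.mem_toFinset] at hx ⊢
    exact List.take_subset _ _ hx

def freeCountTable : List ℕ := [16, 15, 12, 9, 4]

lemma card_prefixCode_and_freeCount :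
    ∀ k < 5, #(prefixCode k) = k ∧ freeCount (prefixCode k) = freeCountTable.getD k 0 := by
  decide

def sizeTable : List ℕ :=
  [3, 1, 1, 3, 1, 2, 3, 2, 1, 3, 2, 1, 3, 2, 2, 3, 1, 3, 2, 2, 3, 1, 2, 3, 2, 2, 3, 3, 2, 3, 3, 3,
    1, 2, 3, 2, 2, 3, 1, 3, 3, 2, 2, 3, 1, 3, 3, 3, 3, 2, 2, 3, 1, 3, 3, 3, 2, 3, 3, 3, 3, 3, 3, 4,
    2, 2, 2, 2, 2, 3, 2, 3, 2, 2, 3, 3, 2, 3, 3, 3, 2, 2, 3, 3, 2, 3, 3, 3, 3, 3, 0, 3, 3, 3, 3, 4,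
    2, 3, 2, 3, 3, 0, 3, 3, 2, 3, 3, 3, 3, 3, 3, 4, 2, 3, 3, 3, 3, 3, 3, 4, 3, 3, 3, 4, 3, 4, 4, 4]

def codeSize (v : Fin 7 → Bool) : ℕ := sizeTable.getD (∑ i, (v i).toNat * 2 ^ (i : ℕ)) 0

set_option maxRecDepth 100000 in
lemma codeSize_lt_five : ∀ v, codeSize v < 5 := by decide

set_option maxRecDepth 100000 in
lemma sum_codeSize : ∑ v, codeSize v = 329 := by decide

set_option maxRecDepth 100000 in
lemma sum_codeSize_update_le : ∀ v : Fin 7 → Bool,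
    ∑ i ∈ univ.filter (fun i => v i = false), codeSize (update v i true) ≤
      freeCountTable.getD (codeSize v) 0 := by
  decide

theorem two_stage_length_11_size_329 :
    ∃ (n1 n2 : ℕ), 0 < n1 ∧ 0 < n2 ∧ n1 + n2 = 11 ∧
      ∃ (c1 : Fin 329 → (Fin n1 → Bool))
        (c2 : Fin 329 → (Fin n1 → Bool) → (Fin n2 → Bool))
        (dec : (Fin n1 → Bool) → (Fin n2 → Bool) → Fin 329),
        TwoStageSuccess n1 n2 329 c1 c2 dec := by
  have hcard (v : Fin 7 → Bool) : #(prefixCode (codeSize v)) = codeSize v :=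
    (card_prefixCode_and_freeCount _ (codeSize_lt_five v)).1
  have hfree (v : Fin 7 → Bool) :
      ∑ u ∈ parents v, #(prefixCode (codeSize u)) ≤ freeCount (prefixCode (codeSize v)) := by
    rw [sum_parents, (card_prefixCode_and_freeCount _ (codeSize_lt_five v)).2]
    simp only [hcard]
    exact sum_codeSize_update_le v
  have hsize : ∑ v, #(prefixCode (codeSize v)) = 329 := by simp only [hcard, sum_codeSize]
  rw [← hsize]
  exact ⟨7, 4, by norm_num, by norm_num, rfl,
    exists_twoStageSuccess_of_sum_parents_le (fun _ => isZCode_prefixCode _) hfree (by omega)⟩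
end

section
/- There exist positive integers n1, n2 with n1 + n2 = 12 and a successful two-stage coding algorithm for the Z-channel of total length 12 correcting 1 asymmetric error whose message set has size 607. -/
set_option maxRecDepth 100000
set_option synthInstance.maxSize 1024
set_option synthInstance.maxHeartbeats 4000000
set_option maxHeartbeats 4000000

/-! ### Auxiliary lemmas about weights -/

lemma wt_subset {n : ℕ} {a b : Fin n → Bool} (h : ∀ k, a k ≤ b k) :
    (Finset.univ.filter (fun k => a k = true)) ⊆ (Finset.univ.filter (fun k => b k = true)) := by
  intro k hk
  simp only [Finset.mem_filter, Finset.mem_univ, true_and] at *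
  have hb := h k
  rw [hk] at hb
  revert hb; cases b k <;> simp

lemma wt_mono {n : ℕ} {a b : Fin n → Bool} (h : ∀ k, a k ≤ b k) : wt a ≤ wt b :=
  Finset.card_le_card (wt_subset h)

lemma wt_le {n : ℕ} (a : Fin n → Bool) : wt a ≤ n := by
  have := Finset.card_filter_le (Finset.univ : Finset (Fin n)) (fun i => a i = true)
  simpa [wt] using this

lemma eq_of_le_of_wt_le {n : ℕ} {a b : Fin n → Bool} (h : ∀ k, a k ≤ b k)
    (hw : wt b ≤ wt a) : a = b := by
  have heq := Finset.eq_of_subset_of_card_le (wt_subset h) hw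
  funext k
  by_cases hb : b k = true
  · have hkb : k ∈ Finset.univ.filter (fun k => b k = true) := by
      simp [hb]
    rw [← heq] at hkb
    simp only [Finset.mem_filter, Finset.mem_univ, true_and] at hkb
    rw [hkb, hb]
  · have hb' : b k = false := by revert hb; cases b k <;> simp
    have ha' : a k = false := by
      have hk := h k
      rw [hb'] at hk
      revert hk; cases a k <;> simp
    rw [ha', hb']

/-- If a point z lies in both 1-balls of a and b, then dZ a b ≤ 1. -/
lemma dZ_le_one {n : ℕ} {a b z : Fin n → Bool}
    (hza : ∀ k, z k ≤ a k) (ha : wt a - wt z ≤ 1)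
    (hzb : ∀ k, z k ≤ b k) (hb : wt b - wt z ≤ 1) : dZ a b ≤ 1 := by
  have key : ∀ (u v : Fin n → Bool), (∀ k, z k ≤ u k) → (∀ k, z k ≤ v k) →
      NN u v ≤ wt v - wt z := by
    intro u v hzu hzv
    have hsub : (Finset.univ.filter (fun k => u k = false ∧ v k = true)) ⊆
        (Finset.univ.filter (fun k => v k = true)) \
          (Finset.univ.filter (fun k => z k = true)) := by
      intro k hk
      simp only [Finset.mem_filter, Finset.mem_univ, true_and, Finset.mem_sdiff] at *
      refine ⟨hk.2, ?_⟩
      have hu := hzu k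
      rw [hk.1] at hu
      revert hu; cases z k <;> simp
    have hcard := Finset.card_le_card hsub
    rw [Finset.card_sdiff_of_subset (wt_subset hzv)] at hcard
    exact hcard
  have h1 := key a b hza hzb
  have h2 := key b a hzb hza
  exact max_le (h1.trans hb) (h2.trans ha)

/-! ### Flip position and rank -/

/-- The set of coordinates where a is 0 but b is 1. -/
def flips {n : ℕ} (a b : Fin n → Bool) : Finset (Fin n) :=
  Finset.univ.filter (fun k => a k = false ∧ b k = true)

/-- The rank of the flipped coordinate: how many zero-coordinates of a lie strictly below it. -/
def rnk {n : ℕ} (a b : Fin n → Bool) : ℕ :=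
  (Finset.univ.filter (fun j => a j = false ∧ ∃ k ∈ flips a b, j < k)).card

lemma flips_spec {n : ℕ} {a b : Fin n → Bool} (h : ∀ k, a k ≤ b k)
    (hw : wt b = wt a + 1) :
    ∃ k, flips a b = {k} ∧ a k = false ∧ b = Function.update a k true := by
  have hunion : (Finset.univ.filter (fun k => b k = true)) =
      (Finset.univ.filter (fun k => a k = true)) ∪ flips a b := by
    ext k
    simp only [flips, Finset.mem_filter, Finset.mem_univ, true_and, Finset.mem_union]
    constructor
    · intro hb
      cases hak : a k
      · exact Or.inr ⟨rfl, hb⟩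
      · exact Or.inl rfl
    · rintro (hak | ⟨-, hb⟩)
      · have := h k; rw [hak] at this; revert this; cases b k <;> simp
      · exact hb
  have hdisj : Disjoint (Finset.univ.filter (fun k => a k = true)) (flips a b) := by
    rw [Finset.disjoint_left]
    intro k hk hk'
    simp only [flips, Finset.mem_filter, Finset.mem_univ, true_and] at hk hk'
    rw [hk] at hk'
    exact absurd hk'.1 (by simp)
  have hcard : wt b = wt a + (flips a b).card := by
    rw [wt, wt, hunion, Finset.card_union_of_disjoint hdisj]
  have hone : (flips a b).card = 1 := by omega
  obtain ⟨k, hk⟩ := Finset.card_eq_one.mp hone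
  have hmem : k ∈ flips a b := hk ▸ Finset.mem_singleton_self k
  simp only [flips, Finset.mem_filter, Finset.mem_univ, true_and] at hmem
  refine ⟨k, hk, hmem.1, ?_⟩
  funext j
  by_cases hj : j = k
  · subst hj
    simp [Function.update_self, hmem.2]
  · rw [Function.update_of_ne hj]
    cases haj : a j
    · cases hbj : b j
      · rfl
      · have : j ∈ flips a b := by
          simp [flips, haj, hbj]
        rw [hk] at this
        exact absurd (Finset.mem_singleton.mp this) hj
    · have := h j; rw [haj] at this; revert this; cases b j <;> simp

lemma rnk_lt {n : ℕ} {a b : Fin n → Bool} {k : Fin n} (hf : flips a b = {k})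
    (hak : a k = false) : rnk a b + wt a < n := by
  have hz : wt a + (Finset.univ.filter (fun j => a j = false)).card = n := by
    have h1 := Finset.card_filter_add_card_filter_not
      (s := (Finset.univ : Finset (Fin n))) (p := fun j => a j = true)
    have h2 : (Finset.univ.filter (fun j => ¬ a j = true)) =
        (Finset.univ.filter (fun j => a j = false)) := by
      apply Finset.filter_congr
      intro j _
      cases a j <;> simp
    rw [h2] at h1
    simpa [wt] using h1
  have hkz : k ∈ Finset.univ.filter (fun j => a j = false) := by simp [hak]
  have hsub : (Finset.univ.filter (fun j => a j = false ∧ ∃ k' ∈ flips a b, j < k')) ⊆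
      (Finset.univ.filter (fun j => a j = false)).erase k := by
    intro j hj
    simp only [hf, Finset.mem_filter, Finset.mem_univ, true_and, Finset.mem_singleton,
      Finset.mem_erase] at hj ⊢
    obtain ⟨hja, k', hk', hlt⟩ := hj
    subst hk'
    exact ⟨ne_of_lt hlt, hja⟩
  have hle := Finset.card_le_card hsub
  rw [Finset.card_erase_of_mem hkz] at hle
  have hpos : 0 < (Finset.univ.filter (fun j => a j = false)).card :=
    Finset.card_pos.mpr ⟨k, hkz⟩
  have : rnk a b ≤ (Finset.univ.filter (fun j => a j = false)).card - 1 := hle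
  omega

lemma rnk_strict_mono {n : ℕ} {a b1 b2 : Fin n → Bool} {k1 k2 : Fin n}
    (h1 : flips a b1 = {k1}) (h2 : flips a b2 = {k2})
    (hak1 : a k1 = false) (hlt : k1 < k2) : rnk a b1 < rnk a b2 := by
  apply Finset.card_lt_card
  rw [Finset.ssubset_iff_of_subset]
  · refine ⟨k1, ?_, ?_⟩
    · simp only [h2, Finset.mem_filter, Finset.mem_univ, true_and]
      exact ⟨hak1, k2, Finset.mem_singleton_self k2, hlt⟩
    · simp only [h1, Finset.mem_filter, Finset.mem_univ, true_and, not_and]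
      intro _
      rintro ⟨k', hk', hk'lt⟩
      rw [Finset.mem_singleton] at hk'
      subst hk'
      exact absurd hk'lt (lt_irrefl _)
  · intro j hj
    simp only [h1, h2, Finset.mem_filter, Finset.mem_univ, true_and] at hj ⊢
    obtain ⟨hja, k', hk', hjlt⟩ := hj
    rw [Finset.mem_singleton] at hk'
    subst hk'
    exact ⟨hja, k2, Finset.mem_singleton_self k2, hjlt.trans hlt⟩

lemma rnk_inj {n : ℕ} {a b b' : Fin n → Bool} {k k' : Fin n}
    (hf : flips a b = {k}) (hf' : flips a b' = {k'})
    (hak : a k = false) (hak' : a k' = false)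
    (hr : rnk a b = rnk a b') : k = k' := by
  rcases lt_trichotomy k k' with h | h | h
  · exact absurd hr (ne_of_lt (rnk_strict_mono hf hf' hak h))
  · exact h
  · exact absurd hr.symm (ne_of_lt (rnk_strict_mono hf' hf hak' h))

/-! ### The generic two-stage construction -/

/-- First-stage encoder: the first component of the message. -/
def C1g (n1 : ℕ) (E : ℕ → ℕ) : (Σ y : Fin n1 → Bool, Fin (E (wt y))) → (Fin n1 → Bool) :=
  fun m => m.1

/-- Second-stage encoder: if no error happened in stage one, send a codeword of the
second-stage Z-code; otherwise send a label (a free point). -/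
def C2g (n1 n2 : ℕ) (E : ℕ → ℕ) (cw : ℕ → ℕ → (Fin n2 → Bool))
    (lw : ℕ → ℕ → ℕ → (Fin n2 → Bool)) :
    (Σ y : Fin n1 → Bool, Fin (E (wt y))) → (Fin n1 → Bool) → (Fin n2 → Bool) :=
  fun m y1 => if m.1 = y1 then cw (wt y1) m.2.val else lw (wt y1) (rnk y1 m.1) m.2.val

theorem generic_uniq {n1 n2 : ℕ} (E : ℕ → ℕ)
    (cw : ℕ → ℕ → (Fin n2 → Bool)) (lw : ℕ → ℕ → ℕ → (Fin n2 → Bool))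
    (H1 : ∀ w ≤ n1, ∀ i < E w, ∀ j < E w, i ≠ j → 2 ≤ dZ (cw w i) (cw w j))
    (H2 : ∀ w < n1, ∀ r < n1 - w, ∀ r' < n1 - w, ∀ i < E (w+1), ∀ i' < E (w+1),
        ¬(r = r' ∧ i = i') → lw w r i ≠ lw w r' i')
    (H3 : ∀ w < n1, ∀ r < n1 - w, ∀ i < E (w+1), ∀ j < E w, lw w r i ∉ ball (cw w j))
    (y1 : Fin n1 → Bool) (y2 : Fin n2 → Bool)
    (m m' : Σ y : Fin n1 → Bool, Fin (E (wt y)))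
    (hm1 : ∀ k, y1 k ≤ C1g n1 E m k)
    (hm2 : ∀ k, y2 k ≤ C2g n1 n2 E cw lw m y1 k)
    (hm3 : (wt (C1g n1 E m) - wt y1) + (wt (C2g n1 n2 E cw lw m y1) - wt y2) ≤ 1)
    (hm1' : ∀ k, y1 k ≤ C1g n1 E m' k)
    (hm2' : ∀ k, y2 k ≤ C2g n1 n2 E cw lw m' y1 k)
    (hm3' : (wt (C1g n1 E m') - wt y1) + (wt (C2g n1 n2 E cw lw m' y1) - wt y2) ≤ 1) :
    m = m' := by
  obtain ⟨y, i⟩ := m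
  obtain ⟨y', i'⟩ := m'
  simp only [C1g, C2g] at hm1 hm2 hm3 hm1' hm2' hm3'
  have hw1 : wt y1 ≤ wt y := wt_mono hm1
  have hw1' : wt y1 ≤ wt y' := wt_mono hm1'
  -- analysis of an erroneous first stage
  have analyze : ∀ (z : Fin n1 → Bool) (jz : Fin (E (wt z))),
      (∀ k, y1 k ≤ z k) →
      (∀ k, y2 k ≤ (if z = y1 then cw (wt y1) jz.val else lw (wt y1) (rnk y1 z) jz.val) k) →
      (wt z - wt y1) + (wt (if z = y1 then cw (wt y1) jz.val else lw (wt y1) (rnk y1 z) jz.val) - wt y2) ≤ 1 →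
      z ≠ y1 →
      wt z = wt y1 + 1 ∧ y2 = lw (wt y1) (rnk y1 z) jz.val ∧
      rnk y1 z < n1 - wt y1 ∧ (∃ k, flips y1 z = {k} ∧ y1 k = false ∧ z = Function.update y1 k true) := by
    intro z jz hz1 hz2 hz3 hne
    rw [if_neg hne] at hz2 hz3
    have hwz : wt y1 ≤ wt z := wt_mono hz1
    have hlt : wt y1 < wt z := by
      rcases lt_or_eq_of_le hwz with h | h
      · exact h
      · exact absurd (eq_of_le_of_wt_le hz1 (le_of_eq h.symm)).symm hne
    have hcov : wt z = wt y1 + 1 := by omega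
    have hz0 : wt (lw (wt y1) (rnk y1 z) jz.val) ≤ wt y2 := by omega
    have hy2eq : y2 = lw (wt y1) (rnk y1 z) jz.val := eq_of_le_of_wt_le hz2 hz0
    obtain ⟨k, hfk, hak, hupd⟩ := flips_spec hz1 hcov
    have hrl := rnk_lt hfk hak
    exact ⟨hcov, hy2eq, by omega, ⟨k, hfk, hak, hupd⟩⟩
  by_cases hy : y = y1 <;> by_cases hy' : y' = y1
  · -- both first stages error-free
    rw [if_pos hy] at hm2 hm3
    rw [if_pos hy'] at hm2' hm3'
    have h0 : wt y - wt y1 = 0 := by rw [hy]; exact Nat.sub_self _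
    have h0' : wt y' - wt y1 = 0 := by rw [hy']; exact Nat.sub_self _
    have hi : i.val < E (wt y1) := by
      have hE : E (wt y) = E (wt y1) := by rw [hy]
      exact lt_of_lt_of_eq i.isLt hE
    have hi' : i'.val < E (wt y1) := by
      have hE : E (wt y') = E (wt y1) := by rw [hy']
      exact lt_of_lt_of_eq i'.isLt hE
    have hii : i.val = i'.val := by
      by_contra hne
      have h2 := H1 (wt y1) (wt_le y1) i.val hi i'.val hi' hne
      have h1 := dZ_le_one hm2 (by omega) hm2' (by omega)
      omega
    have hyy : y = y' := hy.trans hy'.symm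
    subst hyy
    exact congrArg (Sigma.mk y) (Fin.ext hii)
  · -- m error-free, m' erroneous
    exfalso
    obtain ⟨hcov', hy2eq', hrlt', -⟩ := analyze y' i' hm1' hm2' hm3' hy'
    have hwlt : wt y1 < n1 := by have := wt_le y'; omega
    have hi : i.val < E (wt y1) := by
      have hE : E (wt y) = E (wt y1) := by rw [hy]
      exact lt_of_lt_of_eq i.isLt hE
    have hi' : i'.val < E (wt y1 + 1) := by
      have hE : E (wt y') = E (wt y1 + 1) := by rw [hcov']
      exact lt_of_lt_of_eq i'.isLt hE
    rw [if_pos hy] at hm2 hm3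
    have h0 : wt y - wt y1 = 0 := by rw [hy]; exact Nat.sub_self _
    have hball : y2 ∈ ball (cw (wt y1) i.val) := by
      simp only [ball, Finset.mem_filter, Finset.mem_univ, true_and]
      exact ⟨hm2, by omega⟩
    refine absurd hball ?_
    rw [hy2eq']
    exact H3 (wt y1) hwlt _ hrlt' _ hi' _ hi
  · -- m erroneous, m' error-free
    exfalso
    obtain ⟨hcov, hy2eq, hrlt, -⟩ := analyze y i hm1 hm2 hm3 hy
    have hwlt : wt y1 < n1 := by have := wt_le y; omega
    have hi' : i'.val < E (wt y1) := by
      have hE : E (wt y') = E (wt y1) := by rw [hy']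
      exact lt_of_lt_of_eq i'.isLt hE
    have hi : i.val < E (wt y1 + 1) := by
      have hE : E (wt y) = E (wt y1 + 1) := by rw [hcov]
      exact lt_of_lt_of_eq i.isLt hE
    rw [if_pos hy'] at hm2' hm3'
    have h0' : wt y' - wt y1 = 0 := by rw [hy']; exact Nat.sub_self _
    have hball : y2 ∈ ball (cw (wt y1) i'.val) := by
      simp only [ball, Finset.mem_filter, Finset.mem_univ, true_and]
      exact ⟨hm2', by omega⟩
    refine absurd hball ?_
    rw [hy2eq]
    exact H3 (wt y1) hwlt _ hrlt _ hi _ hi'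
  · -- both erroneous
    obtain ⟨hcov, hy2eq, hrlt, k, hfk, hak, hupd⟩ := analyze y i hm1 hm2 hm3 hy
    obtain ⟨hcov', hy2eq', hrlt', k', hfk', hak', hupd'⟩ := analyze y' i' hm1' hm2' hm3' hy'
    have hwlt : wt y1 < n1 := by have := wt_le y; omega
    have hi : i.val < E (wt y1 + 1) := by
      have hE : E (wt y) = E (wt y1 + 1) := by rw [hcov]
      exact lt_of_lt_of_eq i.isLt hE
    have hi' : i'.val < E (wt y1 + 1) := by
      have hE : E (wt y') = E (wt y1 + 1) := by rw [hcov']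
      exact lt_of_lt_of_eq i'.isLt hE
    have heqlw : lw (wt y1) (rnk y1 y) i.val = lw (wt y1) (rnk y1 y') i'.val := by
      rw [← hy2eq, ← hy2eq']
    have hri : rnk y1 y = rnk y1 y' ∧ i.val = i'.val := by
      by_contra hc
      exact H2 (wt y1) hwlt _ hrlt _ hrlt' _ hi _ hi' hc heqlw
    have hkk : k = k' := rnk_inj hfk hfk' hak hak' hri.1
    have hyy : y = y' := by rw [hupd, hupd', hkk]
    subst hyy
    exact congrArg (Sigma.mk y) (Fin.ext hri.2)

theorem generic_exists {n1 n2 M : ℕ} (E : ℕ → ℕ)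
    (cw : ℕ → ℕ → (Fin n2 → Bool)) (lw : ℕ → ℕ → ℕ → (Fin n2 → Bool))
    (H1 : ∀ w ≤ n1, ∀ i < E w, ∀ j < E w, i ≠ j → 2 ≤ dZ (cw w i) (cw w j))
    (H2 : ∀ w < n1, ∀ r < n1 - w, ∀ r' < n1 - w, ∀ i < E (w+1), ∀ i' < E (w+1),
        ¬(r = r' ∧ i = i') → lw w r i ≠ lw w r' i')
    (H3 : ∀ w < n1, ∀ r < n1 - w, ∀ i < E (w+1), ∀ j < E w, lw w r i ∉ ball (cw w j))
    (hcard : Fintype.card (Σ y : Fin n1 → Bool, Fin (E (wt y))) = M) (hM : 0 < M) :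
    ∃ (c1 : Fin M → (Fin n1 → Bool))
      (c2 : Fin M → (Fin n1 → Bool) → (Fin n2 → Bool))
      (dec : (Fin n1 → Bool) → (Fin n2 → Bool) → Fin M),
      TwoStageSuccess n1 n2 M c1 c2 dec := by
  classical
  have φ : (Σ y : Fin n1 → Bool, Fin (E (wt y))) ≃ Fin M :=
    Fintype.equivOfCardEq (hcard.trans (Fintype.card_fin M).symm)
  refine ⟨fun m => C1g n1 E (φ.symm m), fun m => C2g n1 n2 E cw lw (φ.symm m),
    fun z1 z2 =>
      if h : ∃ mm : Fin M,
          (∀ k, z1 k ≤ C1g n1 E (φ.symm mm) k) ∧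
          (∀ k, z2 k ≤ C2g n1 n2 E cw lw (φ.symm mm) z1 k) ∧
          (wt (C1g n1 E (φ.symm mm)) - wt z1) +
            (wt (C2g n1 n2 E cw lw (φ.symm mm) z1) - wt z2) ≤ 1
      then h.choose else ⟨0, hM⟩, ?_⟩
  intro m y1 y2 h1 h2 h3
  have hex : ∃ mm : Fin M,
      (∀ k, y1 k ≤ C1g n1 E (φ.symm mm) k) ∧
      (∀ k, y2 k ≤ C2g n1 n2 E cw lw (φ.symm mm) y1 k) ∧
      (wt (C1g n1 E (φ.symm mm)) - wt y1) +
        (wt (C2g n1 n2 E cw lw (φ.symm mm) y1) - wt y2) ≤ 1 :=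
    ⟨m, h1, h2, h3⟩
  simp only [dif_pos hex]
  obtain ⟨g1, g2, g3⟩ := hex.choose_spec
  have huniq := generic_uniq E cw lw H1 H2 H3 y1 y2 (φ.symm hex.choose) (φ.symm m)
    g1 g2 g3 h1 h2 h3
  have := congrArg φ huniq
  simpa using this

/-! ### The explicit instance: n1 = 8, n2 = 4, 607 messages -/

/-- Number of messages per first-stage codeword, by weight. -/
def Etab : ℕ → ℕ := fun w => [3, 1, 2, 2, 2, 3, 3, 4, 4].getD w 0

/-- The second-stage Z-code (prefixes of this list are used). -/
def cwTab : ℕ → ℕ → (Fin 4 → Bool) :=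
  fun _ j => fun k => Nat.testBit ([0, 3, 12, 15].getD j 0) k.val

/-- Free points of the size-s prefix code. -/
def freeTab : ℕ → List ℕ := fun s =>
  if s ≤ 1 then [1, 2, 3, 4, 5, 6, 7, 8, 9, 10, 11, 12, 13, 14, 15]
  else if s = 2 then [4, 5, 6, 7, 8, 9, 10, 11, 12, 13, 14, 15]
  else if s = 3 then [5, 6, 7, 9, 10, 11, 13, 14, 15]
  else [5, 6, 9, 10]

/-- Labels used in the erroneous branch: distinct free points. -/
def lwTab : ℕ → ℕ → ℕ → (Fin 4 → Bool) :=
  fun w r i => fun k => Nat.testBit ((freeTab (Etab w)).getD (r * Etab (w + 1) + i) 0) k.val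

theorem two_stage_length_12_size_607 :
    ∃ (n1 n2 : ℕ), 0 < n1 ∧ 0 < n2 ∧ n1 + n2 = 12 ∧
      ∃ (c1 : Fin 607 → (Fin n1 → Bool))
        (c2 : Fin 607 → (Fin n1 → Bool) → (Fin n2 → Bool))
        (dec : (Fin n1 → Bool) → (Fin n2 → Bool) → Fin 607),
        TwoStageSuccess n1 n2 607 c1 c2 dec := by
  refine ⟨8, 4, by norm_num, by norm_num, by norm_num, ?_⟩
  exact generic_exists Etab cwTab lwTab (by decide) (by decide) (by decide)
    (by decide) (by norm_num)
end

section
/- There exists a code C ⊆ {0,1}^{10} with |C| = 110 such that d_Z(a,b) ≥ 2 for all distinct a, b ∈ C, i.e., a non-adaptive code of length 10 and size 110 correcting one asymmetric error. -/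
theorem NN_self {n : ℕ} (a : Fin n → Bool) : NN a a = 0 := by
  simp [NN]

theorem dZ_self {n : ℕ} (a : Fin n → Bool) : dZ a a = 0 := by
  simp [dZ, NN_self]

theorem dZ_comm {n : ℕ} (a b : Fin n → Bool) : dZ a b = dZ b a :=
  max_comm _ _

section ListCode

variable {n : ℕ} {L : List (Fin n → Bool)}

theorem nodup_of_pairwise_two_le_dZ (h : L.Pairwise fun a b => 2 ≤ dZ a b) : L.Nodup :=
  h.imp fun {a b} hab heq => by subst heq; simp [dZ_self] at hab

theorem isZCode_toFinset (h : L.Pairwise fun a b => 2 ≤ dZ a b) : IsZCode L.toFinset := by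
  intro a ha b hb hab
  have : Std.Symm fun a b : Fin n → Bool => 2 ≤ dZ a b := ⟨fun a b h => dZ_comm a b ▸ h⟩
  exact h.forall (List.mem_toFinset.mp ha) (List.mem_toFinset.mp hb) hab

end ListCode

def bitsOf (n m : ℕ) : Fin n → Bool := fun i => m.testBit i

def code110 : List (Fin 10 → Bool) :=
  List.map (bitsOf 10)
    [0, 9, 18, 31, 38, 43, 74, 85, 96, 109, 115, 120, 126, 131, 132, 153, 172, 175, 178, 181, 198,
      203, 208, 215, 220, 225, 249, 269, 280, 295, 305, 315, 316, 321, 335, 342, 345, 356, 362, 373,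
      398, 403, 404, 416, 425, 438, 453, 456, 474, 477, 483, 492, 495, 496, 531, 540, 549, 558, 560,
      567, 569, 580, 583, 585, 602, 605, 610, 628, 635, 648, 653, 662, 671, 675, 698, 721, 742, 744,
      749, 766, 768, 774, 779, 789, 798, 808, 813, 818, 831, 844, 848, 851, 865, 871, 888, 897, 903,
      920, 932, 939, 945, 956, 962, 969, 974, 980, 987, 1010, 1013, 1023]

set_option maxRecDepth 10000 in
theorem code110_pairwise : code110.Pairwise fun a b => 2 ≤ dZ a b := by
  decide

theorem exists_code_length_10_size_110 :
    ∃ C : Finset (Fin 10 → Bool), C.card = 110 ∧ IsZCode C :=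
  ⟨code110.toFinset, List.toFinset_card_of_nodup (nodup_of_pairwise_two_le_dZ code110_pairwise),
    isZCode_toFinset code110_pairwise⟩
end

section
/- There exists a code C ⊆ {0,1}^7 with |C| = 18 such that d_Z(a,b) ≥ 2 for all distinct a, b ∈ C, whose number of free points equals 48, and whose weight distribution is z_0 = 1, z_1 = 0, z_2 = 3, z_3 = 5, z_4 = 5, z_5 = 3, z_6 = 1, z_7 = 0 (z_i being the number of codewords of weight i). -/
set_option maxRecDepth 10000
set_option maxHeartbeats 4000000

def toW (k : ℕ) : Fin 7 → Bool := fun i => Nat.testBit k i.val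

def myC : Finset (Fin 7 → Bool) :=
  {toW 0, toW 3, toW 12, toW 48, toW 21, toW 42, toW 70, toW 88, toW 97,
   toW 15, toW 54, toW 57, toW 83, toW 108, toW 93, toW 103, toW 122, toW 63}

lemma wt_le7 (a : Fin 7 → Bool) : wt a ≤ 7 := by
  have := Finset.card_filter_le (Finset.univ : Finset (Fin 7)) (fun i => a i = true)
  simpa [wt] using this

theorem exists_F_optimal_code_length_7 :
    ∃ C : Finset (Fin 7 → Bool), IsZCode C ∧ C.card = 18 ∧ freeCount C = 48 ∧
      ∀ i, (C.filter (fun a => wt a = i)).card =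
        [1, 0, 3, 5, 5, 3, 1, 0].getD i 0 := by
  refine ⟨myC, by unfold IsZCode; decide, by decide, by decide, fun i => ?_⟩
  match i with
  | 0 => decide
  | 1 => decide
  | 2 => decide
  | 3 => decide
  | 4 => decide
  | 5 => decide
  | 6 => decide
  | 7 => decide
  | (n+8) =>
    have : myC.filter (fun a => wt a = n+8) = ∅ := by
      apply Finset.filter_false_of_mem
      intro a _ h
      have := wt_le7 a
      omega
    simp [this]
end
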